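/- (Extended FRL / Lemma 2) Fix k ≥ 1 and let (X, Y, U_1, …, U_k) be finite discrete random variables with I(X; U_1, …, U_k) = 0. Then there exists a random variable U_{k+1} such that I(U_1, …, U_{k+1}; X) = 0, H(Y | U_1, …, U_{k+1}, X) = 0, and |𝒰_{k+1}| ≤ |𝒳| · |𝒰_1| ⋯ |𝒰_k| · (|𝒴| − 1) + 1. -/

import Mathlib

open scoped BigOperators Classical

noncomputable section

/-- Probability of an event under a pmf `p` on a finite sample space. -/
def prE {Ω : Type*} [Fintype Ω] (p : Ω → ℝ) (E : Ω → Prop) : ℝ :=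
  ∑ ω, if E ω then p ω else 0

/-- `p` is a probability mass function. -/
def IsPMF {Ω : Type*} [Fintype Ω] (p : Ω → ℝ) : Prop :=
  (∀ ω, 0 ≤ p ω) ∧ ∑ ω, p ω = 1

/-- P(X = a). -/
def pr {Ω α : Type*} [Fintype Ω] (p : Ω → ℝ) (X : Ω → α) (a : α) : ℝ :=
  prE p (fun ω => X ω = a)

/-- Shannon entropy in bits. -/
def ent {Ω α : Type*} [Fintype Ω] [Fintype α] (p : Ω → ℝ) (X : Ω → α) : ℝ :=
  -∑ a, pr p X a * Real.logb 2 (pr p X a)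

/-- Conditional entropy H(Y | X) = H(X,Y) - H(X). -/
def condEnt {Ω α β : Type*} [Fintype Ω] [Fintype α] [Fintype β]
    (p : Ω → ℝ) (Y : Ω → β) (X : Ω → α) : ℝ :=
  ent p (fun ω => (X ω, Y ω)) - ent p X

/-- Mutual information I(X; Y). -/
def mi {Ω α β : Type*} [Fintype Ω] [Fintype α] [Fintype β]
    (p : Ω → ℝ) (X : Ω → α) (Y : Ω → β) : ℝ :=
  ent p X + ent p Y - ent p (fun ω => (X ω, Y ω))

/-- Conditional mutual information I(X; Y | Z). -/
def cmi {Ω α β γ : Type*} [Fintype Ω] [Fintype α] [Fintype β] [Fintype γ]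
    (p : Ω → ℝ) (X : Ω → α) (Y : Ω → β) (Z : Ω → γ) : ℝ :=
  ent p (fun ω => (X ω, Z ω)) + ent p (fun ω => (Y ω, Z ω))
    - ent p (fun ω => (X ω, Y ω, Z ω)) - ent p Z

/-- Independence of two random variables. -/
def IndepRV {Ω α β : Type*} [Fintype Ω] (p : Ω → ℝ) (X : Ω → α) (Y : Ω → β) : Prop :=
  ∀ a b, prE p (fun ω => X ω = a ∧ Y ω = b) = pr p X a * pr p Y b

/-- X is uniformly distributed on its (finite) alphabet. -/
def IsUniform {Ω α : Type*} [Fintype Ω] [Fintype α] (p : Ω → ℝ) (X : Ω → α) : Prop :=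
  ∀ a, pr p X a = 1 / (Fintype.card α : ℝ)

/-- Entropy of Y conditioned on the event E (e.g. {X = x}). -/
def entCondOn {Ω β : Type*} [Fintype Ω] [Fintype β] (p : Ω → ℝ) (Y : Ω → β)
    (E : Ω → Prop) : ℝ :=
  -∑ b, (prE p (fun ω => Y ω = b ∧ E ω) / prE p E) *
      Real.logb 2 (prE p (fun ω => Y ω = b ∧ E ω) / prE p E)

/-- PMF conditioned on the event E. -/
def pCond {Ω : Type*} [Fintype Ω] (p : Ω → ℝ) (E : Ω → Prop) (ω : Ω) : ℝ :=
  if E ω then p ω / prE p E else 0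

/-! The conditional law of `Y` given `T = (X, U_1, …, U_k)` is a stochastic matrix `κ`, i.e. a
point of a product of `|T|` simplices. It is the mixture `∑_g (∏_t κ t (g t)) δ_g` of the
deterministic kernels `δ_g` attached to maps `g : T → Y`, and all of these lie in an affine
subspace of dimension `|T| (|Y| - 1)`, so by Carathéodory at most `|T| (|Y| - 1) + 1` of them
are needed. Taking `V` to be the index of the mixture component, drawn independently of `T`,
makes `Y = g_V(T)` a function of `(T, V)`, and independence gives
`I(U, V; X) = I(U; X) = 0`. -/

section DeterministicMixture

variable {T β : Type*} [Fintype T] [Fintype β]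

def rowSum : (T → β → ℝ) →ₗ[ℝ] (T → ℝ) where
  toFun v t := ∑ y, v t y
  map_add' v v' := by ext t; simp [Finset.sum_add_distrib]
  map_smul' c v := by ext t; simp [Finset.mul_sum]

def detKernel (g : T → β) : T → β → ℝ := fun t y => if g t = y then 1 else 0

omit [Fintype T] in
lemma rowSum_detKernel (g : T → β) : rowSum (detKernel g) = 1 := by
  ext t; simp [rowSum, detKernel]

lemma finrank_ker_rowSum [Nonempty β] :
    Module.finrank ℝ (LinearMap.ker (rowSum (T := T) (β := β))) =
      Fintype.card T * (Fintype.card β - 1) := by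
  obtain ⟨y₀⟩ := ‹Nonempty β›
  have hsurj : LinearMap.range (rowSum (T := T) (β := β)) = ⊤ :=
    LinearMap.range_eq_top.2 fun a =>
      ⟨fun t y => if y = y₀ then a t else 0, by ext t; simp [rowSum]⟩
  have h := LinearMap.finrank_range_add_finrank_ker (rowSum (T := T) (β := β))
  rw [hsurj] at h
  simp only [finrank_top, Module.finrank_pi, Module.finrank_pi_fintype, Finset.sum_const,
    Finset.card_univ, smul_eq_mul] at h
  rw [Nat.mul_sub_one]
  omega

omit [Fintype T] in
lemma vectorSpan_range_detKernel_le_ker :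
    vectorSpan ℝ (Set.range (detKernel (T := T) (β := β))) ≤ LinearMap.ker rowSum := by
  rw [vectorSpan_def, Submodule.span_le]
  rintro _ ⟨_, ⟨g, rfl⟩, _, ⟨g', rfl⟩, rfl⟩
  simp [rowSum_detKernel]

lemma sum_pi_prod_eq_one (κ : T → β → ℝ) (hκ : ∀ t, ∑ y, κ t y = 1) :
    ∑ g : T → β, ∏ t, κ t (g t) = 1 := by
  rw [← Fintype.prod_sum]; simp [hκ]

lemma sum_pi_prod_mul_detKernel (κ : T → β → ℝ) (hκ : ∀ t, ∑ y, κ t y = 1) (t : T) (y : β) :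
    ∑ g : T → β, (∏ t', κ t' (g t')) * detKernel g t y = κ t y := by
  let f : T → β → ℝ := fun t' y' => κ t' y' * if t = t' then (if y' = y then 1 else 0) else 1
  have hrow : ∀ t', ∑ y', f t' y' = if t = t' then κ t y else 1 := by
    intro t'
    by_cases h : t = t' <;> simp [f, h, hκ]
  calc ∑ g : T → β, (∏ t', κ t' (g t')) * detKernel g t y
      = ∑ g : T → β, ∏ t', f t' (g t') := by
        refine Finset.sum_congr rfl fun g _ => ?_
        rw [Finset.prod_mul_distrib, Finset.prod_ite_eq]
        simp [detKernel]
    _ = κ t y := by rw [← Fintype.prod_sum]; simp [hrow]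

lemma mem_convexHull_range_detKernel (κ : T → β → ℝ) (hκ0 : ∀ t y, 0 ≤ κ t y)
    (hκ1 : ∀ t, ∑ y, κ t y = 1) : κ ∈ convexHull ℝ (Set.range detKernel) := by
  have h := (convex_convexHull ℝ (Set.range (detKernel (T := T) (β := β)))).sum_mem
    (t := Finset.univ) (w := fun g => ∏ t, κ t (g t))
    (fun g _ => Finset.prod_nonneg fun t _ => hκ0 t (g t)) (sum_pi_prod_eq_one κ hκ1)
    (fun g _ => subset_convexHull ℝ _ ⟨g, rfl⟩)
  convert h using 1
  ext t y
  simp only [Finset.sum_apply, Pi.smul_apply, smul_eq_mul, sum_pi_prod_mul_detKernel κ hκ1]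

theorem exists_detKernel_mixture [Nonempty β] (κ : T → β → ℝ) (hκ0 : ∀ t y, 0 ≤ κ t y)
    (hκ1 : ∀ t, ∑ y, κ t y = 1) :
    ∃ (m : ℕ) (w : Fin m → ℝ) (g : Fin m → T → β), IsPMF w ∧
      ∑ j, w j • detKernel (g j) = κ ∧ m ≤ Fintype.card T * (Fintype.card β - 1) + 1 := by
  obtain ⟨ι, _, z, c, hz, hind, hc0, hc1, hcz⟩ :=
    eq_pos_convex_span_of_mem_convexHull (mem_convexHull_range_detKernel κ hκ0 hκ1)
  choose g hg using fun i => hz (Set.mem_range_self i)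
  let e := (Fintype.equivFin ι).symm
  refine ⟨Fintype.card ι, fun j => c (e j), fun j => g (e j), ⟨fun j => (hc0 _).le, ?_⟩, ?_, ?_⟩
  · rw [e.sum_comp c, hc1]
  · simp only [hg]
    rw [e.sum_comp fun i => c i • z i, hcz]
  · calc Fintype.card ι ≤ Module.finrank ℝ (vectorSpan ℝ (Set.range z)) + 1 :=
          hind.card_le_finrank_succ
      _ ≤ Module.finrank ℝ (LinearMap.ker (rowSum (T := T) (β := β))) + 1 := by
          gcongr
          exact Submodule.finrank_mono
            ((vectorSpan_mono ℝ hz).trans vectorSpan_range_detKernel_le_ker)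
      _ = _ := by rw [finrank_ker_rowSum]

theorem exists_functional_representation [Nonempty β] (q : T → β → ℝ) (hq : ∀ t y, 0 ≤ q t y) :
    ∃ (m : ℕ) (w : Fin m → ℝ) (g : Fin m → T → β), IsPMF w ∧
      (∀ t y, (∑ y', q t y') * ∑ j, (if g j t = y then w j else 0) = q t y) ∧
      m ≤ Fintype.card T * (Fintype.card β - 1) + 1 := by
  obtain ⟨y₀⟩ := ‹Nonempty β›
  -- rows of `q` with zero mass get an arbitrary law: they do not affect `q`.
  let κ : T → β → ℝ := fun t y =>
    if ∑ y', q t y' = 0 then detKernel (fun _ => y₀) t y else q t y / ∑ y', q t y'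
  have hκ0 : ∀ t y, 0 ≤ κ t y := by
    intro t y
    by_cases hs : ∑ y', q t y' = 0
    · simp only [κ, hs, if_true, detKernel]; positivity
    · simp only [κ, hs, if_false]
      exact div_nonneg (hq t y) (Finset.sum_nonneg fun y' _ => hq t y')
  have hκ1 : ∀ t, ∑ y, κ t y = 1 := by
    intro t
    by_cases hs : ∑ y', q t y' = 0
    · simp only [κ, hs, if_true]
      exact congrFun (rowSum_detKernel (T := T) fun _ => y₀) t
    · simp only [κ, hs, if_false, ← Finset.sum_div, div_self hs]
  obtain ⟨m, w, g, hw, hmix, hm⟩ := exists_detKernel_mixture κ hκ0 hκ1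
  refine ⟨m, w, g, hw, fun t y => ?_, hm⟩
  have hκ : ∑ j, (if g j t = y then w j else 0) = κ t y := by
    rw [← hmix]; simp [Finset.sum_apply, detKernel]
  rw [hκ]
  by_cases hs : ∑ y', q t y' = 0
  · have hqt : q t y = 0 :=
      (Finset.sum_eq_zero_iff_of_nonneg fun y' _ => hq t y').1 hs y (Finset.mem_univ y)
    simp [hs, hqt]
  · simp only [κ, hs, if_false]
    field_simp

end DeterministicMixture

section FiniteProbability

variable {Ω α β γ : Type*} [Fintype Ω] {p : Ω → ℝ}

lemma pr_nonneg (hp : ∀ ω, 0 ≤ p ω) (A : Ω → α) (a : α) : 0 ≤ pr p A a :=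
  Finset.sum_nonneg fun ω _ => by split_ifs <;> simp [hp ω]

lemma sum_pr [Fintype α] (A : Ω → α) : ∑ a, pr p A a = ∑ ω, p ω := by
  unfold pr prE
  rw [Finset.sum_comm]
  simp

lemma pr_pair (A : Ω → α) (B : Ω → β) (a : α) (b : β) :
    pr p (fun ω => (A ω, B ω)) (a, b) = prE p (fun ω => A ω = a ∧ B ω = b) := by
  simp only [pr, Prod.mk.injEq]

lemma prE_comp_and [Fintype α] (A : Ω → α) (f : α → β) (c : β) (E : Ω → Prop) :
    prE p (fun ω => f (A ω) = c ∧ E ω)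
      = ∑ a, if f a = c then prE p (fun ω => A ω = a ∧ E ω) else 0 := by
  unfold prE
  simp only [Finset.ite_sum_zero]
  rw [Finset.sum_comm]
  refine Finset.sum_congr rfl fun ω _ => ?_
  rw [Finset.sum_eq_single (A ω)] <;> aesop

lemma pr_comp [Fintype α] (A : Ω → α) (f : α → β) (c : β) :
    pr p (fun ω => f (A ω)) c = ∑ a, if f a = c then pr p A a else 0 := by
  simpa only [pr, and_true] using prE_comp_and (p := p) A f c fun _ => True

lemma pr_comp_equiv (A : Ω → α) (e : α ≃ β) (c : β) :
    pr p (fun ω => e (A ω)) c = pr p A (e.symm c) := by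
  simp only [pr, ← Equiv.eq_symm_apply]

lemma pr_reindex {Ω' : Type*} [Fintype Ω'] (e : Ω' ≃ Ω) (A : Ω → α) (a : α) :
    pr (fun n => p (e n)) (fun n => A (e n)) a = pr p A a :=
  e.sum_comp fun ω => if A ω = a then p ω else 0

lemma isPMF_pr [Fintype α] (hp : IsPMF p) (A : Ω → α) : IsPMF (pr p A) :=
  ⟨pr_nonneg hp.1 A, (sum_pr A).trans hp.2⟩

lemma isPMF_reindex {Ω' : Type*} [Fintype Ω'] (e : Ω' ≃ Ω) (hp : IsPMF p) :
    IsPMF fun n => p (e n) :=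
  ⟨fun n => hp.1 (e n), (e.sum_comp p).trans hp.2⟩

lemma IsPMF.nonempty (hp : IsPMF p) : Nonempty Ω := by
  by_contra h
  rw [not_nonempty_iff] at h
  simpa using hp.2

lemma ent_congr {Ω' : Type*} [Fintype Ω'] [Fintype α] {p' : Ω' → ℝ} {A : Ω → α} {A' : Ω' → α}
    (h : ∀ a, pr p A a = pr p' A' a) : ent p A = ent p' A' := by
  simp only [ent, h]

lemma ent_comp_congr {Ω' : Type*} [Fintype Ω'] [Fintype α] [Fintype γ] {p' : Ω' → ℝ}
    {Z : Ω → γ} {Z' : Ω' → γ} (h : ∀ c, pr p Z c = pr p' Z' c) (f : γ → α) :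
    ent p (fun ω => f (Z ω)) = ent p' (fun ω => f (Z' ω)) :=
  ent_congr fun a => by simp only [pr_comp, h]

lemma ent_comp_of_injective [Fintype α] [Fintype β] (A : Ω → α) {f : α → β}
    (hf : Function.Injective f) : ent p (fun ω => f (A ω)) = ent p A := by
  unfold ent
  congr 1
  rw [← Finset.sum_subset (Finset.subset_univ (Finset.univ.image f)),
    Finset.sum_image fun a _ b _ h => hf h]
  · simp only [pr_comp, hf.eq_iff, Finset.sum_ite_eq', Finset.mem_univ, if_true]
  · intro c _ hc
    have hpr : pr p (fun ω => f (A ω)) c = 0 := by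
      rw [pr_comp]
      exact Finset.sum_eq_zero fun a _ => if_neg fun h => hc (by simp [← h])
    simp [hpr]

lemma ent_pair_of_indepRV [Fintype α] [Fintype β] (hp : ∑ ω, p ω = 1) {A : Ω → α}
    {B : Ω → β} (h : IndepRV p A B) : ent p (fun ω => (A ω, B ω)) = ent p A + ent p B := by
  have hA : ∑ a, pr p A a = 1 := by rw [sum_pr, hp]
  have hB : ∑ b, pr p B b = 1 := by rw [sum_pr, hp]
  have xlogx_mul : ∀ x y : ℝ, (x * y) * Real.logb 2 (x * y)
      = y * (x * Real.logb 2 x) + x * (y * Real.logb 2 y) := by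
    intro x y
    rcases eq_or_ne x 0 with hx | hx
    · simp [hx]
    rcases eq_or_ne y 0 with hy | hy
    · simp [hy]
    rw [Real.logb, Real.log_mul hx hy, Real.logb, Real.logb]
    ring
  have hfac : ∀ a b, pr p (fun ω => (A ω, B ω)) (a, b) = pr p A a * pr p B b :=
    fun a b => (pr_pair A B a b).trans (h a b)
  simp only [ent, Fintype.sum_prod_type, hfac, xlogx_mul, Finset.sum_add_distrib,
    ← Finset.sum_mul, ← Finset.mul_sum, hA, hB]
  ring

lemma IndepRV.comp_left [Fintype α] {A : Ω → α} {B : Ω → β} (h : IndepRV p A B) (f : α → γ) :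
    IndepRV p (fun ω => f (A ω)) B := by
  intro c b
  rw [prE_comp_and, pr_comp, Finset.sum_mul]
  refine Finset.sum_congr rfl fun a _ => ?_
  split_ifs
  · exact h a b
  · rw [zero_mul]

lemma mi_comm [Fintype α] [Fintype β] (A : Ω → α) (B : Ω → β) : mi p A B = mi p B A := by
  have hswap : ent p (fun ω => (B ω, A ω)) = ent p (fun ω => (A ω, B ω)) :=
    ent_comp_of_injective (fun ω => (A ω, B ω)) Prod.swap_injective
  simp only [mi, hswap]
  ring

lemma mi_reindex {Ω' : Type*} [Fintype Ω'] [Fintype α] [Fintype β] (e : Ω' ≃ Ω) (A : Ω → α)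
    (B : Ω → β) : mi (fun n => p (e n)) (fun n => A (e n)) (fun n => B (e n)) = mi p A B := by
  unfold mi
  rw [ent_congr (pr_reindex e A), ent_congr (pr_reindex e B),
    ent_congr (pr_reindex e fun ω => (A ω, B ω))]

lemma mi_comp_congr {Ω' : Type*} [Fintype Ω'] [Fintype α] [Fintype β] [Fintype γ]
    {p' : Ω' → ℝ} {Z : Ω → γ} {Z' : Ω' → γ} (h : ∀ c, pr p Z c = pr p' Z' c) (f : γ → α)
    (g : γ → β) :
    mi p (fun ω => f (Z ω)) (fun ω => g (Z ω)) = mi p' (fun ω => f (Z' ω)) (fun ω => g (Z' ω)) := by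
  unfold mi
  rw [ent_comp_congr h f, ent_comp_congr h g, ent_comp_congr h fun z => (f z, g z)]

lemma mi_pair_left_of_indepRV [Fintype α] [Fintype β] [Fintype γ] (hp : ∑ ω, p ω = 1)
    {A : Ω → α} {X : Ω → β} {V : Ω → γ} (h : IndepRV p (fun ω => (A ω, X ω)) V) :
    mi p (fun ω => (A ω, V ω)) X = mi p A X := by
  have hAV : ent p (fun ω => (A ω, V ω)) = ent p A + ent p V :=
    ent_pair_of_indepRV hp (h.comp_left Prod.fst)
  have hAVX : ent p (fun ω => ((A ω, V ω), X ω)) = ent p (fun ω => (A ω, X ω)) + ent p V := by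
    rw [← ent_pair_of_indepRV hp h]
    exact ent_comp_of_injective (fun ω => ((A ω, X ω), V ω))
      (f := fun z => ((z.1.1, z.2), z.1.2)) fun _ _ h => by aesop
  simp only [mi, hAV, hAVX]
  ring

lemma condEnt_comp_eq_zero [Fintype β] [Fintype γ] (Z : Ω → γ) (f : γ → β) :
    condEnt p (fun ω => f (Z ω)) Z = 0 :=
  sub_eq_zero.2 (ent_comp_of_injective Z (f := fun z => (z, f z)) fun _ _ h => congrArg Prod.fst h)

end FiniteProbability

section ProductPMF

variable {S R α β : Type*} [Fintype S] [Fintype R]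

def prodPMF (μ : S → ℝ) (ν : R → ℝ) : S × R → ℝ := fun ω => μ ω.1 * ν ω.2

lemma isPMF_prodPMF {μ : S → ℝ} {ν : R → ℝ} (hμ : IsPMF μ) (hν : IsPMF ν) :
    IsPMF (prodPMF μ ν) :=
  ⟨fun ω => mul_nonneg (hμ.1 ω.1) (hν.1 ω.2), by
    rw [Fintype.sum_prod_type]
    simp only [prodPMF, ← Finset.mul_sum, ← Finset.sum_mul, hμ.2, hν.2, one_mul]⟩

lemma prE_prodPMF_and (μ : S → ℝ) (ν : R → ℝ) (P : S → Prop) (Q : R → Prop) :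
    prE (prodPMF μ ν) (fun ω => P ω.1 ∧ Q ω.2) = prE μ P * prE ν Q := by
  simp only [prE, prodPMF, Fintype.sum_prod_type, Finset.sum_mul_sum, ite_and, ite_mul, mul_ite,
    zero_mul, mul_zero]
  refine Finset.sum_congr rfl fun s _ => Finset.sum_congr rfl fun r _ => ?_
  split_ifs <;> rfl

lemma indepRV_prodPMF {μ : S → ℝ} {ν : R → ℝ} (hμ : ∑ s, μ s = 1) (hν : ∑ r, ν r = 1)
    (A : S → α) (B : R → β) : IndepRV (prodPMF μ ν) (fun ω => A ω.1) (fun ω => B ω.2) := by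
  intro a b
  have hA : pr (prodPMF μ ν) (fun ω => A ω.1) a = prE μ (fun s => A s = a) := by
    simpa [pr, prE, hν] using prE_prodPMF_and μ ν (fun s => A s = a) fun _ => True
  have hB : pr (prodPMF μ ν) (fun ω => B ω.2) b = prE ν (fun r => B r = b) := by
    simpa [pr, prE, hμ] using prE_prodPMF_and μ ν (fun _ => True) fun r => B r = b
  rw [hA, hB]
  exact prE_prodPMF_and μ ν (fun s => A s = a) fun r => B r = b

lemma pr_prodPMF_fst_pair (μ : S → ℝ) (ν : R → ℝ) (G : R → S → β) (s : S) (y : β) :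
    pr (prodPMF μ ν) (fun ω => (ω.1, G ω.2 ω.1)) (s, y)
      = μ s * ∑ r, if G r s = y then ν r else 0 := by
  simp [pr, prE, prodPMF, Fintype.sum_prod_type, Prod.ext_iff, ite_and, Finset.mul_sum]

theorem exists_prodPMF_representation {T : Type*} [Fintype T] [Fintype β] [Nonempty β]
    {q : T × β → ℝ} (hq : IsPMF q) :
    ∃ (m : ℕ) (μ : T → ℝ) (w : Fin m → ℝ) (g : Fin m → T → β), IsPMF μ ∧ IsPMF w ∧
      (∀ c, pr (prodPMF μ w) (fun ω => (ω.1, g ω.2 ω.1)) c = q c) ∧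
      m ≤ Fintype.card T * (Fintype.card β - 1) + 1 := by
  obtain ⟨m, w, g, hw, hrep, hm⟩ :=
    exists_functional_representation (fun t y => q (t, y)) fun t y => hq.1 (t, y)
  refine ⟨m, fun t => ∑ y, q (t, y), w, g, ⟨fun t => Finset.sum_nonneg fun y _ => hq.1 (t, y), ?_⟩,
    hw, fun ⟨t, y⟩ => by rw [pr_prodPMF_fst_pair, hrep], hm⟩
  rw [← Fintype.sum_prod_type', hq.2]

end ProductPMF

theorem stmt6_general {Ω αX αY : Type*} [Fintype Ω] [Fintype αX] [Fintype αY]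
    {k : ℕ} {υ : Fin k → Type*} [∀ i, Fintype (υ i)]
    (p : Ω → ℝ) (hp : IsPMF p) (X : Ω → αX) (Y : Ω → αY) (U : ∀ i, Ω → υ i)
    (hI : mi p X (fun ω => fun i => U i ω) = 0) :
    ∃ (N m : ℕ) (p' : Fin N → ℝ) (X' : Fin N → αX) (Y' : Fin N → αY)
      (U' : ∀ i, Fin N → υ i) (V : Fin N → Fin m),
      IsPMF p' ∧
      (∀ c : αX × αY × (∀ i, υ i),
        pr p' (fun ω => (X' ω, Y' ω, fun i => U' i ω)) c
          = pr p (fun ω => (X ω, Y ω, fun i => U i ω)) c) ∧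
      mi p' (fun ω => ((fun i => U' i ω), V ω)) X' = 0 ∧
      condEnt p' Y' (fun ω => ((fun i => U' i ω), V ω, X' ω)) = 0 ∧
      m ≤ Fintype.card αX * (∏ i, Fintype.card (υ i)) * (Fintype.card αY - 1) + 1 := by
  obtain ⟨ω₀⟩ := hp.nonempty
  have : Nonempty αY := ⟨Y ω₀⟩
  let Z : Ω → (αX × ∀ i, υ i) × αY := fun ω => ((X ω, fun i => U i ω), Y ω)
  obtain ⟨m, μ, w, g, hμ, hw, hlaw, hm⟩ := exists_prodPMF_representation (isPMF_pr hp Z)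
  have hP := isPMF_prodPMF hμ hw
  have hind : IndepRV (prodPMF μ w) (fun ω => (ω.1.2, ω.1.1)) fun ω => ω.2 :=
    indepRV_prodPMF hμ.2 hw.2 (fun t => (t.2, t.1)) id
  let reorder : (αX × ∀ i, υ i) × αY ≃ αX × αY × ∀ i, υ i :=
    ⟨fun z => (z.1.1, z.2, z.1.2), fun c => ((c.1, c.2.2), c.2.1), fun _ => rfl, fun _ => rfl⟩
  let e := (Fintype.equivFin ((αX × ∀ i, υ i) × Fin m)).symm
  refine ⟨_, m, fun n => prodPMF μ w (e n), fun n => (e n).1.1, fun n => g (e n).2 (e n).1,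
    fun i n => (e n).1.2 i, fun n => (e n).2, isPMF_reindex e hP, fun c => ?_, ?_,
    condEnt_comp_eq_zero (fun n => (fun i => (e n).1.2 i, (e n).2, (e n).1.1))
      fun z => g z.2.1 (z.2.2, z.1), ?_⟩
  · calc _ = pr (prodPMF μ w) (fun ω => reorder (ω.1, g ω.2 ω.1)) c := pr_reindex e _ c
      _ = pr p (fun ω => reorder (Z ω)) c := by rw [pr_comp_equiv, pr_comp_equiv, hlaw]
  · rw [mi_reindex e (fun ω => (ω.1.2, ω.2)) fun ω => ω.1.1, mi_pair_left_of_indepRV hP.2 hind,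
      mi_comp_congr hlaw (fun z => z.1.2) fun z => z.1.1, mi_comm]
    exact hI
  · simpa [Fintype.card_prod, Fintype.card_pi] using hm

/-- Extended FRL (Lemma 2): given I(X; U_1,…,U_k) = 0, on a possibly enlarged finite
probability space there exists U_{k+1} with I(U_1,…,U_{k+1}; X) = 0,
H(Y | U_1,…,U_{k+1}, X) = 0 and the stated alphabet bound,
preserving the joint distribution of (X, Y, U_1,…,U_k). -/
theorem stmt6 {Ω αX αY : Type*} [Fintype Ω] [Fintype αX] [Fintype αY]
    {k : ℕ} (hk : 1 ≤ k) {υ : Fin k → Type*} [∀ i, Fintype (υ i)]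
    (p : Ω → ℝ) (hp : IsPMF p) (X : Ω → αX) (Y : Ω → αY) (U : ∀ i, Ω → υ i)
    (hI : mi p X (fun ω => fun i => U i ω) = 0) :
    ∃ (N m : ℕ) (p' : Fin N → ℝ) (X' : Fin N → αX) (Y' : Fin N → αY)
      (U' : ∀ i, Fin N → υ i) (V : Fin N → Fin m),
      IsPMF p' ∧
      (∀ c : αX × αY × (∀ i, υ i),
        pr p' (fun ω => (X' ω, Y' ω, fun i => U' i ω)) c
          = pr p (fun ω => (X ω, Y ω, fun i => U i ω)) c) ∧
      mi p' (fun ω => ((fun i => U' i ω), V ω)) X' = 0 ∧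
      condEnt p' Y' (fun ω => ((fun i => U' i ω), V ω, X' ω)) = 0 ∧
      m ≤ Fintype.card αX * (∏ i, Fintype.card (υ i)) * (Fintype.card αY - 1) + 1 :=
  stmt6_general p hp X Y U hI
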